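/- arXiv:1803.02572 — 4 statements merged into one kernel-verified Lean document; each statement's English description precedes it below -/
import Mathlib

section
/- For every unit vector n = (n₁,n₂,n₃) ∈ ℝ³ (n₁²+n₂²+n₃² = 1) and every θ ∈ ℝ, let U = exp(−iθ(n₁J_x + n₂J_y + n₃J_z)) (matrix exponential). Then U is unitary and for every X ∈ M_d(ℂ) one has Φ(U X U†) = U Φ(X) U†, i.e. the Landau–Streater channel is covariant with respect to the unitary representation of SU(2) for every spin j. -/
open Matrix Complex

noncomputable section

/-- Spin-z matrix for spin j = n/2 in dimension d = n+1: diagonal with entries j - k. -/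
def Jz (n : ℕ) : Matrix (Fin (n+1)) (Fin (n+1)) ℂ :=
  Matrix.diagonal fun k => (n : ℂ) / 2 - (k : ℕ)

/-- Raising operator `J₊`, with entries `(J₊)_{k,k+1} = √((k+1)(n-k))`. -/
def Jp (n : ℕ) : Matrix (Fin (n+1)) (Fin (n+1)) ℂ :=
  Matrix.of fun a b =>
    if (a : ℕ) + 1 = (b : ℕ) then ((Real.sqrt (((a : ℕ) + 1) * (n - (a : ℕ))) : ℝ) : ℂ) else 0

/-- Lowering operator `J₋ = (J₊)†`. -/
def Jm (n : ℕ) : Matrix (Fin (n+1)) (Fin (n+1)) ℂ := (Jp n)ᴴ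

/-- `J_x = (J₊ + J₋)/2`. -/
def Jx (n : ℕ) : Matrix (Fin (n+1)) (Fin (n+1)) ℂ := (1/2 : ℂ) • (Jp n + Jm n)

/-- `J_y = (J₊ - J₋)/(2i)`. -/
def Jy (n : ℕ) : Matrix (Fin (n+1)) (Fin (n+1)) ℂ := (1/(2 * Complex.I)) • (Jp n - Jm n)

/-- The Landau–Streater map `Φ(X) = (JₓXJₓ + J_yXJ_y + J_zXJ_z)/(j(j+1))`. -/
def LS (n : ℕ) (X : Matrix (Fin (n+1)) (Fin (n+1)) ℂ) : Matrix (Fin (n+1)) (Fin (n+1)) ℂ :=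
  (((n : ℂ)/2) * ((n : ℂ)/2 + 1))⁻¹ • (Jx n * X * Jx n + Jy n * X * Jy n + Jz n * X * Jz n)

end

/-! `B = -iθ (v₁Jₓ + v₂J_y + v₃J_z)` is skew-Hermitian, so `U = exp B` is unitary with
`U† = exp (-B)`. The ladder relations `[J_z, J_±] = ±J_±`, `[J_+, J_-] = 2J_z` give the `su(2)`
relations `[J_a, J_b] = i ε_abc J_c`, and with them `[J_a, Σ_b J_b X J_b] = Σ_b J_b [J_a, X] J_b`:
the terms `[J_a, J_b] X J_b + J_b X [J_a, J_b]` cancel in pairs. So `Φ` commutes with `ad B`,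
hence with `exp (ad B)`, which is conjugation by `U`. -/

open NormedSpace

attribute [local instance] LieRing.ofAssociativeRing

noncomputable section BanachAlgebra

variable {𝔸 : Type*} [NormedRing 𝔸] [NormedAlgebra ℚ 𝔸]

variable (𝔸) in
def mulLeftAlgHom : 𝔸 →ₐ[ℚ] 𝔸 →L[ℚ] 𝔸 :=
  .ofLinearMap (ContinuousLinearMap.mul ℚ 𝔸).toLinearMap (by ext; simp)
    fun _ _ ↦ by ext; simp [mul_assoc]

variable (𝔸) in
def mulRightAlgHom : 𝔸ᵐᵒᵖ →ₐ[ℚ] 𝔸 →L[ℚ] 𝔸 :=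
  .ofLinearMap ((ContinuousLinearMap.mul ℚ 𝔸).flip.toLinearMap ∘ₗ
      (MulOpposite.opLinearEquiv ℚ).symm.toLinearMap) (by ext; simp)
    fun _ _ ↦ by ext; simp [mul_assoc]

variable [CompleteSpace 𝔸]

theorem exp_mul_mul_exp_neg_eq_exp_ad (B X : 𝔸) :
    exp B * X * exp (-B) = exp (mulLeftAlgHom 𝔸 B - mulRightAlgHom 𝔸 (.op B)) X := by
  have hcomm : Commute (mulLeftAlgHom 𝔸 B) (mulRightAlgHom 𝔸 (.op B)) :=
    ContinuousLinearMap.ext fun Y ↦ (mul_assoc B Y B).symm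
  rw [sub_eq_add_neg, exp_add_of_commute hcomm.neg_right, ← map_neg, ← MulOpposite.op_neg,
    ← map_exp (mulLeftAlgHom 𝔸) (ContinuousLinearMap.mul ℚ 𝔸).continuous,
    ← map_exp (mulRightAlgHom 𝔸)
      ((ContinuousLinearMap.mul ℚ 𝔸).flip.continuous.comp MulOpposite.continuous_unop),
    exp_op]
  simp [mulLeftAlgHom, mulRightAlgHom, mul_assoc]

theorem map_exp_mul_mul_exp_neg (f : 𝔸 →L[ℚ] 𝔸) {B : 𝔸} (hf : ∀ X, f ⁅B, X⁆ = ⁅B, f X⁆)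
    (X : 𝔸) : f (exp B * X * exp (-B)) = exp B * f X * exp (-B) := by
  have hcomm : Commute f (mulLeftAlgHom 𝔸 B - mulRightAlgHom 𝔸 (.op B)) :=
    ContinuousLinearMap.ext fun Y ↦ by
      simpa [mulLeftAlgHom, mulRightAlgHom, Ring.lie_def] using hf Y
  rw [exp_mul_mul_exp_neg_eq_exp_ad, exp_mul_mul_exp_neg_eq_exp_ad]
  exact congr($(hcomm.exp_right) X)

end BanachAlgebra

namespace Matrix

variable {m : Type*} [Fintype m] [DecidableEq m]

theorem map_exp_mul_mul_exp_neg (f : Matrix m m ℂ →ₗ[ℂ] Matrix m m ℂ) {B : Matrix m m ℂ}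
    (hf : ∀ X, f ⁅B, X⁆ = ⁅B, f X⁆) (X : Matrix m m ℂ) :
    f (exp B * X * exp (-B)) = exp B * f X * exp (-B) := by
  -- `exp` depends only on the topology, so any submultiplicative norm will do.
  let _ : NormedRing (Matrix m m ℂ) := Matrix.linftyOpNormedRing
  let _ : NormedAlgebra ℂ (Matrix m m ℂ) := Matrix.linftyOpNormedAlgebra
  let _ : NormedAlgebra ℚ (Matrix m m ℂ) := Matrix.linftyOpNormedAlgebra
  have : CompleteSpace (Matrix m m ℂ) := FiniteDimensional.complete ℂ _
  exact _root_.map_exp_mul_mul_exp_neg ((LinearMap.toContinuousLinearMap f).restrictScalars ℚ) hf X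

theorem exp_mem_unitaryGroup {B : Matrix m m ℂ} (hB : Bᴴ = -B) : exp B ∈ unitaryGroup m ℂ := by
  rw [mem_unitaryGroup_iff, star_eq_conjTranspose, ← exp_conjTranspose, hB,
    ← exp_add_of_commute _ _ (Commute.refl B).neg_right, add_neg_cancel, NormedSpace.exp_zero]

end Matrix

section LadderOperators

variable {L : Type*} [LieRing L] [LieAlgebra ℂ L] {h e f : L}

theorem lie_ladder_x_y (hef : ⁅e, f⁆ = (2 : ℂ) • h) :
    ⁅(1/2 : ℂ) • (e + f), (1/(2 * I)) • (e - f)⁆ = I • h := by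
  simp only [lie_smul, smul_lie, add_lie, lie_sub, lie_self, hef]
  rw [← lie_skew f e, hef]
  match_scalars
  field_simp
  ring_nf
  simp [I_sq]

theorem lie_ladder_y_h (he : ⁅h, e⁆ = e) (hf : ⁅h, f⁆ = -f) :
    ⁅(1/(2 * I)) • (e - f), h⁆ = I • ((1/2 : ℂ) • (e + f)) := by
  rw [← lie_skew, lie_smul, lie_sub, he, hf]
  match_scalars <;> field_simp <;> ring_nf <;> simp [I_sq]

theorem lie_ladder_h_x (he : ⁅h, e⁆ = e) (hf : ⁅h, f⁆ = -f) :
    ⁅h, (1/2 : ℂ) • (e + f)⁆ = I • ((1/(2 * I)) • (e - f)) := by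
  rw [lie_smul, lie_add, he, hf]
  match_scalars <;> field_simp

end LadderOperators

theorem lie_sandwich_sum {R A : Type*} [CommRing R] [Ring A] [Algebra R A] {z p q : A} (c : R)
    (hp : ⁅z, p⁆ = c • q) (hq : ⁅z, q⁆ = -(c • p)) (X : A) :
    ⁅z, p * X * p + q * X * q + z * X * z⁆ = p * ⁅z, X⁆ * p + q * ⁅z, X⁆ * q + z * ⁅z, X⁆ * z := by
  rw [← sub_eq_zero]
  calc _ = ⁅z, p⁆ * X * p + p * X * ⁅z, p⁆ + ⁅z, q⁆ * X * q + q * X * ⁅z, q⁆ := by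
        simp only [Ring.lie_def]; noncomm_ring
    _ = 0 := by
        rw [hp, hq]
        simp only [neg_mul, mul_neg, smul_mul_assoc, mul_smul_comm]
        abel

lemma Jm_apply (n : ℕ) (a b : Fin (n+1)) :
    Jm n a b = if (b : ℕ) + 1 = (a : ℕ)
      then ((Real.sqrt (((b : ℕ) + 1) * (n - (b : ℕ))) : ℝ) : ℂ) else 0 := by
  simp only [Jm, Jp, conjTranspose_apply, of_apply, apply_ite, star_zero, Complex.star_def,
    Complex.conj_ofReal]
  split_ifs <;> simp_all

lemma Jz_isHermitian (n : ℕ) : (Jz n).IsHermitian := by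
  simp [Jz, Matrix.IsHermitian]

lemma Jx_isHermitian (n : ℕ) : (Jx n).IsHermitian := by
  simp [Jx, Jm, IsHermitian, conjTranspose_smul, add_comm]

lemma Jy_isHermitian (n : ℕ) : (Jy n).IsHermitian := by
  simp [Jy, Jm, IsHermitian, conjTranspose_smul, ← smul_neg]

lemma lie_Jz_Jp (n : ℕ) : ⁅Jz n, Jp n⁆ = Jp n := by
  ext a b
  simp only [Ring.lie_def, Jz, Jp, Matrix.sub_apply, Matrix.diagonal_mul, Matrix.mul_diagonal,
    Matrix.of_apply]
  split_ifs with h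
  · rw [← h]; push_cast; ring
  · simp

lemma lie_Jz_Jm (n : ℕ) : ⁅Jz n, Jm n⁆ = -Jm n := by
  calc ⁅Jz n, (Jp n)ᴴ⁆ = -⁅Jz n, Jp n⁆ᴴ := by
        rw [Ring.lie_def, Ring.lie_def, conjTranspose_sub, conjTranspose_mul, conjTranspose_mul,
          (Jz_isHermitian n).eq, neg_sub]
    _ = -Jm n := by rw [lie_Jz_Jp, Jm]

lemma Fin.sum_ite_val_eq {M : Type*} [AddCommMonoid M] (n m : ℕ) (g : ℕ → M) :
    ∑ c : Fin (n+1), (if (c : ℕ) = m then g c else 0) = if m ≤ n then g m else 0 := by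
  rw [Fin.sum_univ_eq_sum_range (fun c => if c = m then g c else 0), Finset.sum_ite_eq']
  simp

lemma ofReal_sqrt_mul_self (n k : ℕ) (hk : k ≤ n) :
    ((√((k + 1) * (n - k)) : ℝ) : ℂ) * (√((k + 1) * (n - k)) : ℝ) = (k + 1) * (n - k) := by
  have : (k : ℝ) ≤ n := by exact_mod_cast hk
  rw [← Complex.ofReal_mul, Real.mul_self_sqrt (by nlinarith)]
  push_cast; ring

-- No boundary cases: the weight `(k + 1)(n - k)` vanishes at `k = n`,
-- and `k(n + 1 - k)` below at `k = 0`.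
lemma Jp_mul_Jm (n : ℕ) :
    Jp n * Jm n = diagonal fun k : Fin (n+1) => ((k : ℕ) + 1 : ℂ) * (n - (k : ℕ)) := by
  ext a b
  simp only [mul_apply, Jp, Jm_apply, of_apply, diagonal_apply, ite_mul, mul_ite, zero_mul,
    mul_zero]
  split_ifs with hab
  · subst hab
    simp only [← ite_and, and_self, eq_comm (a := (a : ℕ) + 1)]
    rw [Fin.sum_ite_val_eq n _ fun _ => _]
    split_ifs with ha
    · exact ofReal_sqrt_mul_self n a (by omega)
    · rw [show (a : ℕ) = n by omega, sub_self, mul_zero]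
  · refine Finset.sum_eq_zero fun c _ => ?_
    have : (a : ℕ) ≠ b := Fin.val_injective.ne hab
    split_ifs <;> first | rfl | omega

lemma Jm_mul_Jp (n : ℕ) :
    Jm n * Jp n = diagonal fun k : Fin (n+1) => ((k : ℕ) : ℂ) * (n + 1 - (k : ℕ)) := by
  ext a b
  simp only [mul_apply, Jp, Jm_apply, of_apply, diagonal_apply, ite_mul, mul_ite, zero_mul,
    mul_zero]
  split_ifs with hab
  · subst hab
    simp only [← ite_and, and_self]
    cases a using Fin.cases with
    | zero => simp
    | succ a =>
      simp only [Fin.val_succ, add_left_inj]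
      rw [Fin.sum_ite_val_eq n a fun k => (√((k + 1) * (n - k)) : ℂ) * (√((k + 1) * (n - k)) : ℂ),
        if_pos a.is_lt.le, ofReal_sqrt_mul_self n a a.is_lt.le]
      push_cast; ring
  · refine Finset.sum_eq_zero fun c _ => ?_
    have : (a : ℕ) ≠ b := Fin.val_injective.ne hab
    split_ifs <;> first | rfl | omega

lemma lie_Jp_Jm (n : ℕ) : ⁅Jp n, Jm n⁆ = (2 : ℂ) • Jz n := by
  rw [Ring.lie_def, Jp_mul_Jm, Jm_mul_Jp, diagonal_sub, Jz, ← diagonal_smul]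
  congr 1; ext k; simp; ring

lemma lie_Jx_Jy (n : ℕ) : ⁅Jx n, Jy n⁆ = I • Jz n := lie_ladder_x_y (lie_Jp_Jm n)

lemma lie_Jy_Jz (n : ℕ) : ⁅Jy n, Jz n⁆ = I • Jx n := lie_ladder_y_h (lie_Jz_Jp n) (lie_Jz_Jm n)

lemma lie_Jz_Jx (n : ℕ) : ⁅Jz n, Jx n⁆ = I • Jy n := lie_ladder_h_x (lie_Jz_Jp n) (lie_Jz_Jm n)

noncomputable def spinSandwich (n : ℕ) :
    Matrix (Fin (n+1)) (Fin (n+1)) ℂ →ₗ[ℂ] Matrix (Fin (n+1)) (Fin (n+1)) ℂ where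
  toFun X := Jx n * X * Jx n + Jy n * X * Jy n + Jz n * X * Jz n
  map_add' X Y := by simp only [Matrix.mul_add, Matrix.add_mul]; abel
  map_smul' c X := by simp only [Matrix.mul_smul, Matrix.smul_mul, smul_add, RingHom.id_apply]

lemma spinSandwich_apply (n : ℕ) (X : Matrix (Fin (n+1)) (Fin (n+1)) ℂ) :
    spinSandwich n X = Jx n * X * Jx n + Jy n * X * Jy n + Jz n * X * Jz n := rfl

lemma spinSandwich_lie {n : ℕ} {A : Matrix (Fin (n+1)) (Fin (n+1)) ℂ}
    (hA : A ∈ Submodule.span ℂ {Jx n, Jy n, Jz n}) (X : Matrix (Fin (n+1)) (Fin (n+1)) ℂ) :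
    spinSandwich n ⁅A, X⁆ = ⁅A, spinSandwich n X⁆ := by
  induction hA using Submodule.span_induction generalizing X with
  | mem J hJ =>
    simp only [spinSandwich_apply]
    rcases hJ with rfl | rfl | rfl
    · rw [add_rotate (Jx n * X * Jx n), add_rotate (Jx n * ⁅Jx n, X⁆ * Jx n)]
      exact (lie_sandwich_sum I (lie_Jx_Jy n) (by rw [← lie_skew, lie_Jz_Jx]) X).symm
    · rw [← add_rotate (Jz n * X * Jz n), ← add_rotate (Jz n * ⁅Jy n, X⁆ * Jz n)]
      exact (lie_sandwich_sum I (lie_Jy_Jz n) (by rw [← lie_skew, lie_Jx_Jy]) X).symm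
    · exact (lie_sandwich_sum I (lie_Jz_Jx n) (by rw [← lie_skew, lie_Jy_Jz]) X).symm
  | zero => simp
  | add A B _ _ hA hB => simp only [add_lie, map_add, hA, hB]
  | smul c A _ hA => simp only [smul_lie, map_smul, hA]

theorem landau_streater_su2_covariance_general (n : ℕ)
    (v₁ v₂ v₃ : ℝ) (θ : ℝ)
    (U : Matrix (Fin (n+1)) (Fin (n+1)) ℂ)
    (hU : U = NormedSpace.exp
      ((-(Complex.I * (θ : ℂ))) • ((v₁ : ℂ) • Jx n + (v₂ : ℂ) • Jy n + (v₃ : ℂ) • Jz n))) :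
    U ∈ Matrix.unitaryGroup (Fin (n+1)) ℂ ∧
      ∀ X : Matrix (Fin (n+1)) (Fin (n+1)) ℂ, LS n (U * X * Uᴴ) = U * LS n X * Uᴴ := by
  set B := (-(I * (θ : ℂ))) • ((v₁ : ℂ) • Jx n + (v₂ : ℂ) • Jy n + (v₃ : ℂ) • Jz n)
  have hB : Bᴴ = -B := by
    simp [B, conjTranspose_smul, (Jx_isHermitian n).eq, (Jy_isHermitian n).eq,
      (Jz_isHermitian n).eq]
    abel
  have hUH : Uᴴ = exp (-B) := by rw [hU, ← exp_conjTranspose, hB]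
  have hB_mem : B ∈ Submodule.span ℂ {Jx n, Jy n, Jz n} := by
    refine Submodule.smul_mem _ _ (add_mem (add_mem ?_ ?_) ?_) <;>
      exact Submodule.smul_mem _ _ (Submodule.subset_span (by simp))
  refine ⟨hU ▸ exp_mem_unitaryGroup hB, fun X => ?_⟩
  rw [hUH, hU]
  simp only [LS, ← spinSandwich_apply, mul_smul_comm, smul_mul_assoc]
  rw [map_exp_mul_mul_exp_neg _ (spinSandwich_lie hB_mem)]

/-- `SU(2)` covariance of the Landau–Streater channel: for every unit vector
`(n₁,n₂,n₃) ∈ ℝ³` and every `θ ∈ ℝ`, the matrix `U = exp(-iθ(n₁Jₓ + n₂J_y + n₃J_z))`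
is unitary and `Φ(U X U†) = U Φ(X) U†` for every `X`. -/
theorem landau_streater_su2_covariance (n : ℕ) (hn : 1 ≤ n)
    (v₁ v₂ v₃ : ℝ) (hv : v₁ ^ 2 + v₂ ^ 2 + v₃ ^ 2 = 1) (θ : ℝ)
    (U : Matrix (Fin (n+1)) (Fin (n+1)) ℂ)
    (hU : U = NormedSpace.exp
      ((-(Complex.I * (θ : ℂ))) • ((v₁ : ℂ) • Jx n + (v₂ : ℂ) • Jy n + (v₃ : ℂ) • Jz n))) :
    U ∈ Matrix.unitaryGroup (Fin (n+1)) ℂ ∧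
      ∀ X : Matrix (Fin (n+1)) (Fin (n+1)) ℂ, LS n (U * X * Uᴴ) = U * LS n X * Uᴴ :=
  landau_streater_su2_covariance_general n v₁ v₂ v₃ θ U hU
end

section
/- Suppose n ≥ 3 (i.e. j > 1). Then the Landau–Streater channel Φ is not globally unitarily covariant: there exist a unitary matrix U ∈ M_d(ℂ) and a density matrix ρ ∈ M_d(ℂ) such that for every unitary matrix V ∈ M_d(ℂ) one has Φ(U ρ U†) ≠ V Φ(ρ) V†. -/
open Matrix Complex

open scoped ComplexOrder

/-!
`Φ` sends the pure state `|k⟩⟨k|` to a diagonal state supported on `k - 1, k, k + 1`, since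
`JₓXJₓ + J_yXJ_y = (J₊XJ₋ + J₋XJ₊)/2`. The purity `tr Φ(ρ)²` is invariant under unitary
conjugation, yet for `ρ = |0⟩⟨0|` and its image `|1⟩⟨1|` under the transposition of `e₀, e₁`
the purities differ by a nonzero multiple of `(n - 1)(n - 2)²` once `n ≥ 3`.
-/

theorem Matrix.PosSemidef.single_self {ι R : Type*} [DecidableEq ι] [CommRing R] [PartialOrder R]
    [StarRing R] [StarOrderedRing R] {c : R} (hc : 0 ≤ c) (i : ι) : (single i i c).PosSemidef := by
  rw [← diagonal_single]
  exact .diagonal (Pi.single_nonneg.mpr hc)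

section

variable {ι R : Type*} [Fintype ι] [DecidableEq ι]

theorem Matrix.mul_single_mul_apply [NonAssocSemiring R] (A B : Matrix ι ι R) (k a b : ι) :
    (A * single k k (1 : R) * B) a b = A a k * B k b := by
  simp [Matrix.mul_apply, Matrix.single, ite_and, Finset.sum_ite_eq]

theorem Matrix.swap_mem_unitaryGroup [CommRing R] [StarRing R] (i j : ι) :
    swap R i j ∈ unitaryGroup ι R := by
  rw [mem_unitaryGroup_iff, star_eq_conjTranspose, conjTranspose_swap, swap_mul_self]

theorem Matrix.swap_mul_single_mul_conjTranspose_swap [CommRing R] [StarRing R] (i j : ι) (c : R) :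
    swap R i j * single i i c * (swap R i j)ᴴ = single j j c := by
  simp [swap, PEquiv.toMatrix_toPEquiv_mul, PEquiv.mul_toMatrix_toPEquiv]

theorem Matrix.trace_mul_self_conj_of_mem_unitaryGroup [CommRing R] [StarRing R]
    {V : Matrix ι ι R} (hV : V ∈ unitaryGroup ι R) (M : Matrix ι ι R) :
    trace (V * M * Vᴴ * (V * M * Vᴴ)) = trace (M * M) := by
  have hV' : Vᴴ * V = 1 := mem_unitaryGroup_iff'.mp hV
  rw [show V * M * Vᴴ * (V * M * Vᴴ) = V * (M * (Vᴴ * V) * M) * Vᴴ by simp only [Matrix.mul_assoc],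
    hV', Matrix.mul_one, trace_mul_cycle, hV', Matrix.one_mul]

theorem Matrix.trace_smul_diagonal_mul_self [CommSemiring R] (c : R) (w : ι → R) :
    trace ((c • diagonal w) * (c • diagonal w)) = c ^ 2 * ∑ a, w a ^ 2 := by
  simp only [Matrix.smul_mul, Matrix.mul_smul, smul_smul, diagonal_mul_diagonal, trace_smul,
    trace_diagonal, smul_eq_mul, pow_two]

theorem Complex.ofReal_sqrt_sq {x : ℝ} (hx : 0 ≤ x) : ((√x : ℝ) : ℂ) ^ 2 = x := by
  rw [← ofReal_pow, Real.sq_sqrt hx]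

end

namespace LandauStreater

variable {n : ℕ}

theorem Jm_apply (a b : Fin (n+1)) : Jm n a b = Jp n b a := by
  simp [Jm, Jp, apply_ite (starRingEnd ℂ)]

theorem Jx_mul_mul_Jx_add_Jy_mul_mul_Jy (X : Matrix (Fin (n+1)) (Fin (n+1)) ℂ) :
    Jx n * X * Jx n + Jy n * X * Jy n = (1/2 : ℂ) • (Jp n * X * Jm n + Jm n * X * Jp n) := by
  simp only [Jx, Jy, Matrix.smul_mul, Matrix.mul_smul, Matrix.add_mul, Matrix.mul_add,
    Matrix.sub_mul, Matrix.mul_sub, one_div, mul_inv, inv_I]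
  match_scalars <;> ring_nf <;> norm_num [I_sq]

theorem Jp_apply_mul_Jp_apply_of_ne_left {a b : Fin (n+1)} (h : a ≠ b) (k : Fin (n+1)) :
    Jp n a k * Jp n b k = 0 := by
  simp only [Jp, of_apply]
  split_ifs
  · exact absurd (Fin.ext (by omega)) h
  all_goals simp

theorem Jp_apply_mul_Jp_apply_of_ne_right {a b : Fin (n+1)} (h : a ≠ b) (k : Fin (n+1)) :
    Jp n k a * Jp n k b = 0 := by
  simp only [Jp, of_apply]
  split_ifs
  · exact absurd (Fin.ext (by omega)) h
  all_goals simp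

theorem Jz_apply_mul_Jz_apply_of_ne {a b : Fin (n+1)} (h : a ≠ b) (k : Fin (n+1)) :
    Jz n a k * Jz n k b = 0 := by
  by_cases hak : a = k
  · subst hak; simp [Jz, h]
  · simp [Jz, hak]

theorem LS_single_self (k : Fin (n+1)) :
    LS n (single k k 1) = (((n : ℂ)/2) * ((n : ℂ)/2 + 1))⁻¹ •
      diagonal fun a => (Jp n a k ^ 2 + Jp n k a ^ 2) / 2 + Jz n a k ^ 2 := by
  rw [LS, Jx_mul_mul_Jx_add_Jy_mul_mul_Jy]
  congr 1
  ext a b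
  simp only [Matrix.add_apply, Matrix.smul_apply, mul_single_mul_apply, Jm_apply, diagonal_apply,
    smul_eq_mul]
  split_ifs with hab
  · subst hab
    rw [← transpose_apply (Jz n), Jz, diagonal_transpose]
    ring
  · simp [Jp_apply_mul_Jp_apply_of_ne_left hab, Jp_apply_mul_Jp_apply_of_ne_right hab,
      Jz_apply_mul_Jz_apply_of_ne hab]

theorem trace_LS_single_zero_mul_self :
    trace (LS n (single 0 0 1) * LS n (single 0 0 1)) =
      (((n : ℂ)/2) * ((n : ℂ)/2 + 1))⁻¹ ^ 2 * (((n : ℂ)/2) ^ 4 + ((n : ℂ)/2) ^ 2) := by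
  rw [LS_single_self, trace_smul_diagonal_mul_self]
  congr 1
  cases n with
  | zero => simp [Jp, Jz]
  | succ m =>
    rw [Fin.sum_univ_succ, Fin.sum_univ_succ]
    simp [Jp, Jz, Fin.ext_iff, ofReal_sqrt_sq, add_nonneg]
    ring

theorem trace_LS_single_one_mul_self (hn : 2 ≤ n) :
    trace (LS n (single 1 1 1) * LS n (single 1 1 1)) =
      (((n : ℂ)/2) * ((n : ℂ)/2 + 1))⁻¹ ^ 2 *
        (((n : ℂ)/2) ^ 2 + ((n : ℂ)/2 - 1) ^ 4 + ((n : ℂ) - 1) ^ 2) := by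
  rw [LS_single_self, trace_smul_diagonal_mul_self]
  congr 1
  obtain ⟨m, rfl⟩ := Nat.exists_eq_add_of_le' hn
  rw [Fin.sum_univ_succ, Fin.sum_univ_succ, Fin.sum_univ_succ]
  have h : ((m : ℝ) + 2 - 1) = m + 1 := by ring
  simp [Jp, Jz, Fin.ext_iff, Nat.mod_eq_of_lt, h, mul_pow, ofReal_sqrt_sq, add_nonneg]
  ring

theorem trace_LS_single_one_mul_self_ne (hn : 3 ≤ n) :
    trace (LS n (single 1 1 1) * LS n (single 1 1 1)) ≠
      trace (LS n (single 0 0 1) * LS n (single 0 0 1)) := by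
  rw [trace_LS_single_one_mul_self (by omega), trace_LS_single_zero_mul_self]
  have hc : ((n : ℂ)/2) * ((n : ℂ)/2 + 1) ≠ 0 := by positivity
  have h1 : (n : ℂ) - 1 ≠ 0 := sub_ne_zero.mpr (by exact_mod_cast (by omega : n ≠ 1))
  have h2 : (n : ℂ) - 2 ≠ 0 := sub_ne_zero.mpr (by exact_mod_cast (by omega : n ≠ 2))
  intro h
  apply mul_ne_zero h1 (pow_ne_zero 2 h2)
  linear_combination (-2) * mul_left_cancel₀ (pow_ne_zero 2 (inv_ne_zero hc)) h

end LandauStreater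

open LandauStreater in
/-- for `n ≥ 3` (i.e. j > 1) the Landau–Streater channel is not globally
unitarily covariant: there are a unitary `U` and a density matrix `ρ` such that no unitary
`V` satisfies `Φ(UρU†) = V Φ(ρ) V†`. -/
theorem landau_streater_not_unitarily_covariant (n : ℕ) (hn : 3 ≤ n) :
    ∃ U ∈ Matrix.unitaryGroup (Fin (n+1)) ℂ,
      ∃ ρ : Matrix (Fin (n+1)) (Fin (n+1)) ℂ, ρ.PosSemidef ∧ ρ.trace = 1 ∧
        ∀ V ∈ Matrix.unitaryGroup (Fin (n+1)) ℂ,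
          LS n (U * ρ * Uᴴ) ≠ V * LS n ρ * Vᴴ := by
  refine ⟨swap ℂ 0 1, swap_mem_unitaryGroup 0 1, single 0 0 1, .single_self zero_le_one 0,
    trace_single_eq_same 0 1, fun V hV h => trace_LS_single_one_mul_self_ne hn ?_⟩
  rw [swap_mul_single_mul_conjTranspose_swap] at h
  rw [h, trace_mul_self_conj_of_mem_unitaryGroup hV]
end

section
/- For every k ∈ {0,…,n}, writing m = j − k, the Landau–Streater channel acts on the rank-one projector e_k e_k† by Φ(e_k e_k†) = [ (j(j+1) − m(m+1)) / (2j(j+1)) ] · e_{k−1} e_{k−1}† + [ m² / (j(j+1)) ] · e_k e_k† + [ (j(j+1) − m(m−1)) / (2j(j+1)) ] · e_{k+1} e_{k+1}†, where the coefficient of e_{k−1}e_{k−1}† vanishes when k = 0 (m = j) and the coefficient of e_{k+1}e_{k+1}† vanishes when k = n (m = −j), so those terms may be omitted in the boundary cases. In particular the nonzero eigenvalues of Φ(e_k e_k†) are (j(j+1)−m(m+1))/(2j(j+1)), (j(j+1)−m(m−1))/(2j(j+1)) and m²/(j(j+1)). -/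
open Matrix Complex

/-!
Writing `J_x = (J₊ + J₋)/2` and `J_y = (J₊ - J₋)/(2i)`, the cross terms cancel and
`J_x X J_x + J_y X J_y = (J₊ X J₋ + J₋ X J₊)/2`. Column `k` of `J₊` is a multiple of `e_{k-1}`
whose squared modulus is `k(n+1-k) = j(j+1) - m(m+1)`, and column `k` of `J₋` is a multiple of
`e_{k+1}` with squared modulus `(k+1)(n-k) = j(j+1) - m(m-1)`; so `J₊ P_k J₋`, `J₋ P_k J₊` and
`J_z P_k J_z` are multiples of the projectors onto `e_{k-1}`, `e_{k+1}` and `e_k`. Hence `Φ(P_k)`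
is diagonal, and its nonzero eigenvalues are its nonzero diagonal entries.
-/

theorem range_single_add_single_add_single_diff_zero {ι M : Type*} [DecidableEq ι]
    [AddZeroClass M] {i j l : ι} (a b c : M) (hij : i ≠ j) (hjl : j ≠ l)
    (hil : i = l → a = 0 ∨ c = 0) :
    Set.range (Pi.single i a + Pi.single j b + Pi.single l c) \ {0} =
      ({a, b, c} : Set M) \ {0} := by
  ext x
  simp only [Set.mem_sdiff, Set.mem_range, Set.mem_insert_iff, Set.mem_singleton_iff,
    Pi.add_apply, Pi.single_apply]
  constructor
  · rintro ⟨⟨y, rfl⟩, hy⟩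
    refine ⟨?_, hy⟩
    by_cases hyj : y = j
    · simp [hyj, hij.symm, hjl]
    by_cases hyi : y = i <;> by_cases hyl : y = l <;> subst_vars
    · rcases hil rfl with h | h <;> simp [h, hyj]
    all_goals simp_all
  · rintro ⟨hx | hx | hx, hx0⟩ <;> subst hx <;> refine ⟨?_, hx0⟩
    · refine ⟨i, ?_⟩
      rcases eq_or_ne i l with rfl | h
      · simp [hij, (hil rfl).resolve_left hx0]
      · simp [hij, h]
    · exact ⟨j, by simp [hij.symm, hjl]⟩
    · refine ⟨l, ?_⟩
      rcases eq_or_ne i l with rfl | h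
      · simp [hij, (hil rfl).resolve_right hx0]
      · simp [Ne.symm h, hjl.symm]

theorem xy_sandwich_eq_ladder_sandwich {A : Type*} [Ring A] [Algebra ℂ A] (a b x : A) :
    ((1/2 : ℂ) • (a + b)) * x * ((1/2 : ℂ) • (a + b))
      + ((1/(2*I)) • (a - b)) * x * ((1/(2*I)) • (a - b))
      = (2 : ℂ)⁻¹ • (a * x * b + b * x * a) := by
  have hI : (1/(2*I)) * (1/(2*I)) = -(1/4 : ℂ) := by
    rw [div_mul_div_comm, mul_mul_mul_comm, I_mul_I]; norm_num
  simp only [add_mul, mul_add, sub_mul, mul_sub, smul_add, smul_sub]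
  simp only [smul_mul_assoc, mul_smul_comm, smul_smul, hI]
  module

theorem diagonal_mul_single_mul_diagonal {m α : Type*} [Fintype m] [DecidableEq m]
    [NonUnitalNonAssocSemiring α] (d e : m → α) (i j : m) (c : α) :
    diagonal d * single i j c * diagonal e = single i j (d i * c * e j) := by
  ext r s
  simp only [mul_diagonal, diagonal_mul, single_apply]
  split_ifs with h <;> simp [h]

theorem mul_single_one_mul_conjTranspose {m α : Type*} [Fintype m] [DecidableEq m]
    [Semiring α] [StarRing α] {A : Matrix m m α} {k i : m} {c : α}
    (hA : Aᵀ k = Pi.single i c) :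
    A * single k k 1 * Aᴴ = single i i (c * star c) := by
  ext r s
  have entry : (A * single k k (1 : α) * Aᴴ) r s = A r k * star (A s k) := by
    simp [mul_apply, single_apply, ite_and]
  rw [entry, ← transpose_apply A k r, ← transpose_apply A k s, hA]
  simp only [Pi.single_apply, single_apply]
  by_cases hr : r = i <;> by_cases hs : s = i <;> simp [hr, hs, eq_comm (a := i)]

theorem ofReal_sqrt_mul_star_self {x : ℝ} (hx : 0 ≤ x) :
    ((√x : ℝ) : ℂ) * star ((√x : ℝ) : ℂ) = x := by
  rw [Complex.star_def, conj_ofReal, ← ofReal_mul, Real.mul_self_sqrt hx]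

theorem Fin.sub_one_ne_self {n : ℕ} (hn : 1 ≤ n) (k : Fin (n+1)) : k - 1 ≠ k := by
  rw [Ne, sub_eq_self, Fin.one_eq_zero_iff]; omega

theorem Fin.add_one_ne_self {n : ℕ} (hn : 1 ≤ n) (k : Fin (n+1)) : k + 1 ≠ k := by
  rw [Ne, add_eq_left, Fin.one_eq_zero_iff]; omega

theorem Fin.eq_zero_or_eq_last_of_sub_one_eq_add_one {n : ℕ} {k : Fin (n+1)}
    (h : k - 1 = k + 1) : k = 0 ∨ k = Fin.last n := by
  by_contra! hk
  have hv := congrArg Fin.val h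
  rw [Fin.coe_sub_one, if_neg hk.1, Fin.val_add_one, if_neg hk.2] at hv
  have := Fin.val_ne_zero_iff.mpr hk.1
  omega

-- The indices `k - 1` and `k + 1` wrap around at `k = 0` and `k = n`, where the coefficients
-- vanish.
theorem Jp_transpose_apply (n : ℕ) (k : Fin (n+1)) :
    (Jp n)ᵀ k = Pi.single (k - 1) ((√((k : ℝ) * (n + 1 - k)) : ℝ) : ℂ) := by
  ext r
  simp only [transpose_apply, Jp, of_apply, Pi.single_apply]
  rcases eq_or_ne k 0 with rfl | hk
  · simp
  · have hval : ((k - 1 : Fin (n+1)) : ℕ) = k - 1 := by rw [Fin.coe_sub_one, if_neg hk]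
    have hk' : (k : ℕ) ≠ 0 := Fin.val_ne_zero_iff.mpr hk
    have hiff : (r : ℕ) + 1 = k ↔ r = k - 1 := by rw [Fin.ext_iff, hval]; omega
    by_cases h : r = k - 1
    · rw [if_pos (hiff.mpr h), if_pos h]
      have hk : (k : ℝ) = r + 1 := by exact_mod_cast (hiff.mpr h).symm
      rw [hk]; ring_nf
    · rw [if_neg (mt hiff.mp h), if_neg h]

theorem Jm_transpose_apply (n : ℕ) (k : Fin (n+1)) :
    (Jm n)ᵀ k = Pi.single (k + 1) ((√(((k : ℝ) + 1) * (n - k)) : ℝ) : ℂ) := by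
  ext r
  simp only [transpose_apply, Jm, conjTranspose_apply, Jp, of_apply, Pi.single_apply,
    Complex.star_def, apply_ite (starRingEnd ℂ), map_zero, conj_ofReal]
  rcases eq_or_ne k (Fin.last n) with rfl | hk
  · simp
  · have hval : ((k + 1 : Fin (n+1)) : ℕ) = k + 1 := by rw [Fin.val_add_one, if_neg hk]
    simp only [Fin.ext_iff, hval, eq_comm]

theorem Jp_mul_single_mul_Jm (n : ℕ) (k : Fin (n+1)) :
    Jp n * single k k 1 * Jm n = single (k - 1) (k - 1) (((k : ℝ) * (n + 1 - k) : ℝ) : ℂ) := by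
  have hk : (k : ℝ) ≤ n := by exact_mod_cast k.is_le
  rw [Jm, mul_single_one_mul_conjTranspose (Jp_transpose_apply n k),
    ofReal_sqrt_mul_star_self (mul_nonneg (by positivity) (by linarith))]

theorem Jm_mul_single_mul_Jp (n : ℕ) (k : Fin (n+1)) :
    Jm n * single k k 1 * Jp n =
      single (k + 1) (k + 1) ((((k : ℝ) + 1) * (n - k) : ℝ) : ℂ) := by
  have hk : (k : ℝ) ≤ n := by exact_mod_cast k.is_le
  rw [← conjTranspose_conjTranspose (Jp n), ← Jm,
    mul_single_one_mul_conjTranspose (Jm_transpose_apply n k),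
    ofReal_sqrt_mul_star_self (mul_nonneg (by positivity) (by linarith))]

theorem Jz_mul_single_mul_Jz (n : ℕ) (k : Fin (n+1)) :
    Jz n * single k k 1 * Jz n = single k k ((((n : ℝ) / 2 - k) ^ 2 : ℝ) : ℂ) := by
  rw [Jz, diagonal_mul_single_mul_diagonal]
  push_cast; ring_nf

theorem LS_single (n : ℕ) (k : Fin (n+1)) (j m : ℝ) (hj : j = n / 2) (hm : m = j - k) :
    LS n (single k k 1) =
      single (k - 1) (k - 1) (((j*(j+1) - m*(m+1)) / (2*j*(j+1)) : ℝ) : ℂ)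
        + single k k ((m^2 / (j*(j+1)) : ℝ) : ℂ)
        + single (k + 1) (k + 1) (((j*(j+1) - m*(m-1)) / (2*j*(j+1)) : ℝ) : ℂ) := by
  have hscale : ((n : ℂ) / 2 * ((n : ℂ) / 2 + 1))⁻¹ = ((j * (j + 1))⁻¹ : ℝ) := by
    subst hj; push_cast; ring
  have hhalf : (2 : ℂ)⁻¹ = ((2⁻¹ : ℝ) : ℂ) := by push_cast; rfl
  rw [LS, Jx, Jy, xy_sandwich_eq_ladder_sandwich, Jp_mul_single_mul_Jm, Jm_mul_single_mul_Jp,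
    Jz_mul_single_mul_Jz, hscale, hhalf]
  simp only [smul_add, smul_single, smul_eq_mul, ← ofReal_mul]
  have hlower : j * (j + 1) - m * (m + 1) = k * (n + 1 - k) := by rw [hm, hj]; ring
  have hupper : j * (j + 1) - m * (m - 1) = (k + 1) * (n - k) := by rw [hm, hj]; ring
  rw [hlower, hupper, ← hj, ← hm, add_right_comm]
  congr 3 <;> push_cast <;> simp only [div_eq_mul_inv, mul_inv] <;> ring

/-- action of the Landau–Streater channel on the projector `e_k e_k†`
(where `e_k = |j, m⟩` with `m = j - k`):
`Φ(e_k e_k†) = ((j(j+1)-m(m+1))/(2j(j+1))) e_{k-1}e_{k-1}† + (m²/(j(j+1))) e_k e_k†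
+ ((j(j+1)-m(m-1))/(2j(j+1))) e_{k+1}e_{k+1}†`.
The indices `k-1`, `k+1` are taken in `Fin (n+1)` (wraparound); at the boundaries `k = 0`
and `k = n` the corresponding coefficients vanish, so the wrapped terms are zero and may be
omitted.  In particular the nonzero eigenvalues of `Φ(e_k e_k†)` are
`(j(j+1)-m(m+1))/(2j(j+1))`, `(j(j+1)-m(m-1))/(2j(j+1))` and `m²/(j(j+1))`. -/
theorem landau_streater_on_spin_projector (n : ℕ) (hn : 1 ≤ n) (k : Fin (n+1))
    (j m : ℝ) (hj : j = n / 2) (hm : m = j - k) :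
    LS n (Matrix.single k k 1) =
        (((j*(j+1) - m*(m+1)) / (2*j*(j+1)) : ℝ) : ℂ) •
            Matrix.single (k - 1) (k - 1) 1
          + ((m^2 / (j*(j+1)) : ℝ) : ℂ) • Matrix.single k k 1
          + (((j*(j+1) - m*(m-1)) / (2*j*(j+1)) : ℝ) : ℂ) •
              Matrix.single (k + 1) (k + 1) 1 ∧
      (k = 0 → (j*(j+1) - m*(m+1)) / (2*j*(j+1)) = 0) ∧
      (k = Fin.last n → (j*(j+1) - m*(m-1)) / (2*j*(j+1)) = 0) ∧
      spectrum ℂ (LS n (Matrix.single k k 1)) \ {0} =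
        ({(((j*(j+1) - m*(m+1)) / (2*j*(j+1)) : ℝ) : ℂ),
          (((j*(j+1) - m*(m-1)) / (2*j*(j+1)) : ℝ) : ℂ),
          ((m^2 / (j*(j+1)) : ℝ) : ℂ)} : Set ℂ) \ {0} := by
  have hLS := LS_single n k j m hj hm
  have hlower : k = 0 → (j*(j+1) - m*(m+1)) / (2*j*(j+1)) = 0 := by
    rintro rfl
    simp [hm]
  have hupper : k = Fin.last n → (j*(j+1) - m*(m-1)) / (2*j*(j+1)) = 0 := by
    rintro rfl
    rw [hm, Fin.val_last, hj]
    ring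
  refine ⟨by simpa only [smul_single, smul_eq_mul, mul_one] using hLS, hlower, hupper, ?_⟩
  rw [hLS, ← diagonal_single, ← diagonal_single, ← diagonal_single, diagonal_add,
    diagonal_add, spectrum_diagonal, Set.pair_comm]
  -- `k - 1 = k + 1` only for `n = 1`, where `k` is at a boundary.
  refine range_single_add_single_add_single_diff_zero _ _ _ (Fin.sub_one_ne_self hn k)
    (Fin.add_one_ne_self hn k).symm fun h => ?_
  exact (Fin.eq_zero_or_eq_last_of_sub_one_eq_add_one h).imp
    (fun h0 => by rw [hlower h0, ofReal_zero]) (fun hl => by rw [hupper hl, ofReal_zero])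
end

section
/- Suppose n ≥ 2 (i.e. j ≥ 1). Let φ = (1/√2)(e₀ ⊗ e₀ + e_n ⊗ e_n) ∈ ℂ^d ⊗ ℂ^d (the Schmidt-rank-2 state built from |j,j⟩|j,j⟩ and |j,−j⟩|j,−j⟩), and let ρ_out = (Φ ⊗ Φ)(φφ†). Then the partial transpose of ρ_out on the second factor is not positive semidefinite (it has the negative eigenvalue −j²/(j+1)²); consequently, by the Peres–Horodecki criterion, (Φ ⊗ Φ)(φφ†) is entangled, so Φ ⊗ Φ is not entanglement annihilating and Φ is not entanglement breaking for j ≥ 1. -/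
open Matrix Complex

open Kronecker
open scoped ComplexOrder

/-- The triple `(J₁,J₂,J₃) = (Jₓ,J_y,J_z)`. -/
noncomputable def Jvec (n : ℕ) : Fin 3 → Matrix (Fin (n+1)) (Fin (n+1)) ℂ :=
  ![Jx n, Jy n, Jz n]

/-!
For `n ≥ 2` the ladder operators `J_±` never connect the extreme weights `0` and `n`, so `J_x` and
`J_y` vanish on them, and on the block spanned by `e_a ⊗ e_b` with `a, b ∈ {0, n}` only the
`J_z ⊗ J_z` term of `(Φ ⊗ Φ)(φφ†)` survives: there it equals `(n/(n+2))² φφ†`. Testing the partial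
transpose against `e_0 ⊗ e_n - e_n ⊗ e_0` gives `-(n/(n+2))² = -j²/(j+1)² < 0`, whereas a separable
`Σ Aᵢ ⊗ Bᵢ` has the positive semidefinite partial transpose `Σ Aᵢ ⊗ Bᵢᵀ` (Peres–Horodecki).
-/

namespace Matrix

variable {m n ι 𝕜 : Type*}

def partialTranspose (R : Matrix (m × n) (m × n) 𝕜) : Matrix (m × n) (m × n) 𝕜 :=
  of fun p q => R (p.1, q.2) (q.1, p.2)

theorem partialTranspose_kronecker [Mul 𝕜] (A : Matrix m m 𝕜) (B : Matrix n n 𝕜) :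
    (A ⊗ₖ B).partialTranspose = A ⊗ₖ Bᵀ :=
  rfl

theorem partialTranspose_sum [AddCommMonoid 𝕜] (s : Finset ι)
    (R : ι → Matrix (m × n) (m × n) 𝕜) :
    (∑ i ∈ s, R i).partialTranspose = ∑ i ∈ s, (R i).partialTranspose := by
  ext p q
  simp only [partialTranspose, of_apply, sum_apply]

theorem posSemidef_partialTranspose_sum_kronecker [RCLike 𝕜] [Finite m] [Finite n] [Fintype ι]
    {A : ι → Matrix m m 𝕜} {B : ι → Matrix n n 𝕜}
    (h : ∀ i, (A i).PosSemidef ∧ (B i).PosSemidef) :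
    (∑ i, A i ⊗ₖ B i).partialTranspose.PosSemidef := by
  simp only [partialTranspose_sum, partialTranspose_kronecker]
  exact posSemidef_sum _ fun i _ => (h i).1.kronecker (h i).2.transpose

theorem star_single_sub_single_dotProduct_mulVec [Fintype n] [DecidableEq n] [CommRing 𝕜]
    [StarRing 𝕜] (R : Matrix n n 𝕜) (a b : n) :
    star (Pi.single a 1 - Pi.single b 1) ⬝ᵥ R *ᵥ (Pi.single a 1 - Pi.single b 1)
      = R a a - R a b - R b a + R b b := by
  simp only [star_sub, Pi.star_single, star_one, mulVec_sub, mulVec_single, MulOpposite.op_one,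
    one_smul, dotProduct_sub, sub_dotProduct, single_dotProduct, col_apply, one_mul]
  ring

theorem not_posSemidef_of_not_nonneg [Fintype n] [DecidableEq n] [CommRing 𝕜] [PartialOrder 𝕜]
    [StarRing 𝕜] {R : Matrix n n 𝕜} (a b : n) (h : ¬ 0 ≤ R a a - R a b - R b a + R b b) :
    ¬ R.PosSemidef := fun hR =>
  h (star_single_sub_single_dotProduct_mulVec R a b ▸ hR.dotProduct_mulVec_nonneg _)

theorem mul_vecMulVec_star_mul_conjTranspose [Fintype n] [CommSemiring 𝕜] [StarRing 𝕜]
    (M : Matrix m n 𝕜) (v : n → 𝕜) :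
    M * vecMulVec v (star v) * Mᴴ = vecMulVec (M *ᵥ v) (star (M *ᵥ v)) := by
  rw [mul_vecMulVec, vecMulVec_mul, star_mulVec]

theorem kronecker_mulVec_single [Fintype m] [Fintype n] [DecidableEq m] [DecidableEq n]
    [CommSemiring 𝕜] (A : Matrix m m 𝕜) (B : Matrix n n 𝕜) (i : m) (j : n) :
    (A ⊗ₖ B) *ᵥ Pi.single (i, j) 1 = fun x => A x.1 i * B x.2 j := by
  ext x
  simp

end Matrix

theorem Fin.zero_ne_last {n : ℕ} (hn : n ≠ 0) : (0 : Fin (n+1)) ≠ Fin.last n := by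
  simpa [Fin.ext_iff] using hn.symm

section Spin

variable {n : ℕ}

theorem Jp_apply_eq_zero {u v : Fin (n+1)} (h : (u : ℕ) + 1 ≠ v) : Jp n u v = 0 := by
  simp [Jp, h]

theorem Jx_apply_eq_zero {u v : Fin (n+1)} (huv : (u : ℕ) + 1 ≠ v) (hvu : (v : ℕ) + 1 ≠ u) :
    Jx n u v = 0 := by
  simp [Jx, Jm, Jp_apply_eq_zero huv, Jp_apply_eq_zero hvu]

theorem Jy_apply_eq_zero {u v : Fin (n+1)} (huv : (u : ℕ) + 1 ≠ v) (hvu : (v : ℕ) + 1 ≠ u) :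
    Jy n u v = 0 := by
  simp [Jy, Jm, Jp_apply_eq_zero huv, Jp_apply_eq_zero hvu]

theorem Jvec_apply_of_not_adjacent (α : Fin 3) {u v : Fin (n+1)} (huv : (u : ℕ) + 1 ≠ v)
    (hvu : (v : ℕ) + 1 ≠ u) :
    Jvec n α u v = if α = 2 then Jz n u v else 0 := by
  fin_cases α
  · simp only [Jvec]
    simp [Jx_apply_eq_zero huv hvu]
  · simp only [Jvec]
    simp [Jy_apply_eq_zero huv hvu]
  · rfl

theorem Jz_apply_zero_zero : Jz n 0 0 = n / 2 := by
  simp [Jz]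

theorem Jz_apply_last_last : Jz n (Fin.last n) (Fin.last n) = -(n / 2) := by
  simp only [Jz, diagonal_apply_eq, Fin.val_last]
  ring

theorem Jz_apply_of_ne {u v : Fin (n+1)} (h : u ≠ v) : Jz n u v = 0 :=
  diagonal_apply_ne _ h

theorem Jvec_apply_of_extreme (hn : 2 ≤ n) (α : Fin 3) {u v : Fin (n+1)}
    (hu : u = 0 ∨ u = Fin.last n) (hv : v = 0 ∨ v = Fin.last n) :
    Jvec n α u v = if α = 2 then Jz n u v else 0 := by
  have not_adjacent : ∀ {a b : Fin (n+1)}, (a = 0 ∨ a = Fin.last n) →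
      (b = 0 ∨ b = Fin.last n) → (a : ℕ) + 1 ≠ b := by
    rintro a b (rfl | rfl) (rfl | rfl) <;> simp only [Fin.val_zero, Fin.val_last] <;> omega
  exact Jvec_apply_of_not_adjacent α (not_adjacent hu hv) (not_adjacent hv hu)

noncomputable def extremalBellState (n : ℕ) : Fin (n+1) × Fin (n+1) → ℂ :=
  (Real.sqrt 2 : ℂ)⁻¹ • (Pi.single (0, 0) 1 + Pi.single (Fin.last n, Fin.last n) 1)

theorem extremalBellState_eq_ite (hn : n ≠ 0) :
    extremalBellState n = fun p => if p.1 = 0 ∧ p.2 = 0 then ((Real.sqrt 2 : ℂ))⁻¹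
      else if p.1 = Fin.last n ∧ p.2 = Fin.last n then ((Real.sqrt 2 : ℂ))⁻¹ else 0 := by
  have h0 := Fin.zero_ne_last hn
  ext ⟨a, b⟩
  by_cases h : a = 0 ∧ b = 0
  · obtain ⟨rfl, rfl⟩ := h
    simp [extremalBellState, h0]
  · by_cases h' : a = Fin.last n ∧ b = Fin.last n
    · obtain ⟨rfl, rfl⟩ := h'
      simp [extremalBellState, h0.symm]
    · simp [extremalBellState, h, h']

theorem Jvec_kronecker_mulVec_extremalBellState_apply (hn : 2 ≤ n) (α β : Fin 3)
    {x : Fin (n+1) × Fin (n+1)} (h1 : x.1 = 0 ∨ x.1 = Fin.last n)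
    (h2 : x.2 = 0 ∨ x.2 = Fin.last n) :
    ((Jvec n α ⊗ₖ Jvec n β) *ᵥ extremalBellState n) x
      = if α = 2 ∧ β = 2 ∧ x.1 = x.2 then (Real.sqrt 2 : ℂ)⁻¹ * ((n : ℂ) / 2) ^ 2 else 0 := by
  obtain ⟨a, b⟩ := x
  have h0 := Fin.zero_ne_last (n := n) (by omega)
  simp only [extremalBellState, mulVec_smul, mulVec_add, kronecker_mulVec_single,
    Pi.smul_apply, Pi.add_apply, smul_eq_mul]
  rw [Jvec_apply_of_extreme hn α h1 (.inl rfl), Jvec_apply_of_extreme hn α h1 (.inr rfl),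
    Jvec_apply_of_extreme hn β h2 (.inl rfl), Jvec_apply_of_extreme hn β h2 (.inr rfl)]
  by_cases hαβ : α = 2 ∧ β = 2
  · obtain ⟨rfl, rfl⟩ := hαβ
    rcases h1 with rfl | rfl <;> rcases h2 with rfl | rfl <;>
      simp only [Jz_apply_zero_zero, Jz_apply_last_last, Jz_apply_of_ne h0, Jz_apply_of_ne h0.symm,
        h0, h0.symm, true_and, if_true, if_false] <;> ring
  · rw [if_neg (show ¬(α = 2 ∧ β = 2 ∧ a = b) from fun h => hαβ ⟨h.1, h.2.1⟩)]
    rcases not_and_or.mp hαβ with h | h <;> simp [h]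

noncomputable def LSTensorSq (n : ℕ)
    (R : Matrix (Fin (n+1) × Fin (n+1)) (Fin (n+1) × Fin (n+1)) ℂ) :
    Matrix (Fin (n+1) × Fin (n+1)) (Fin (n+1) × Fin (n+1)) ℂ :=
  ((((n : ℂ)/2) * ((n : ℂ)/2 + 1))^2)⁻¹ •
    ∑ α : Fin 3, ∑ β : Fin 3, (Jvec n α ⊗ₖ Jvec n β) * R * (Jvec n α ⊗ₖ Jvec n β)ᴴ

theorem LSTensorSq_extremalBellState_apply (hn : 2 ≤ n) {x y : Fin (n+1) × Fin (n+1)}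
    (hx1 : x.1 = 0 ∨ x.1 = Fin.last n) (hx2 : x.2 = 0 ∨ x.2 = Fin.last n)
    (hy1 : y.1 = 0 ∨ y.1 = Fin.last n) (hy2 : y.2 = 0 ∨ y.2 = Fin.last n) :
    LSTensorSq n (vecMulVec (extremalBellState n) (star (extremalBellState n))) x y
      = if x.1 = x.2 ∧ y.1 = y.2 then ((n : ℂ) / (n + 2)) ^ 2 / 2 else 0 := by
  simp only [LSTensorSq, Matrix.smul_apply, Matrix.sum_apply, mul_vecMulVec_star_mul_conjTranspose,
    vecMulVec_apply, Pi.star_apply,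
    Jvec_kronecker_mulVec_extremalBellState_apply hn _ _ hx1 hx2,
    Jvec_kronecker_mulVec_extremalBellState_apply hn _ _ hy1 hy2]
  split_ifs with h
  · have hs : ((Real.sqrt 2 : ℝ) : ℂ) ^ 2 = 2 := by
      rw [← ofReal_pow, Real.sq_sqrt zero_le_two, ofReal_ofNat]
    simp only [h, and_true, RCLike.star_def, ite_mul, zero_mul, Fin.sum_univ_three, Fin.reduceEq,
      and_false, ↓reduceIte, add_zero, zero_add, Finset.sum_ite_eq', Finset.mem_univ, map_mul,
      map_inv₀, conj_ofReal, map_pow, map_div₀, map_natCast, map_ofNat, smul_eq_mul]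
    field_simp
    rw [hs]
  · rcases not_and_or.mp h with h | h <;> simp [h]

theorem not_posSemidef_partialTranspose_LSTensorSq_extremalBellState (hn : 2 ≤ n) :
    ¬ (LSTensorSq n (vecMulVec (extremalBellState n)
      (star (extremalBellState n)))).partialTranspose.PosSemidef := by
  have h0 := Fin.zero_ne_last (n := n) (by omega)
  apply not_posSemidef_of_not_nonneg (0, Fin.last n) (Fin.last n, 0)
  simp only [partialTranspose, of_apply]
  rw [LSTensorSq_extremalBellState_apply hn (.inl rfl) (.inr rfl) (.inl rfl) (.inr rfl),
    LSTensorSq_extremalBellState_apply hn (.inl rfl) (.inl rfl) (.inr rfl) (.inr rfl),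
    LSTensorSq_extremalBellState_apply hn (.inr rfl) (.inr rfl) (.inl rfl) (.inl rfl),
    LSTensorSq_extremalBellState_apply hn (.inr rfl) (.inl rfl) (.inr rfl) (.inl rfl)]
  simp only [h0, h0.symm, and_self, if_true, if_false]
  rw [show (0 : ℂ) - ((n : ℂ) / (n + 2)) ^ 2 / 2 - ((n : ℂ) / (n + 2)) ^ 2 / 2 + 0
      = ((-((n : ℝ) / (n + 2)) ^ 2 : ℝ) : ℂ) by push_cast; ring, Complex.zero_le_real, not_le]
  have hn0 : (0 : ℝ) < n := by exact_mod_cast (show 0 < n by omega)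
  exact neg_neg_of_pos (by positivity)

end Spin

/-- for `n ≥ 2` (i.e. `j ≥ 1`), let
`φ = (1/√2)(e₀ ⊗ e₀ + e_n ⊗ e_n)` and `ρ_out = (Φ ⊗ Φ)(φφ†)`.  Then the partial
transpose of `ρ_out` on the second factor is not positive semidefinite; consequently
(by the Peres–Horodecki criterion) `ρ_out` is entangled — it admits no separable
decomposition `ρ_out = Σᵢ Aᵢ ⊗ Bᵢ` with `Aᵢ`, `Bᵢ` positive semidefinite — so
`Φ ⊗ Φ` is not entanglement annihilating and `Φ` is not entanglement breaking. -/
theorem landau_streater_tensor_square_preserves_entanglement (n : ℕ) (hn : 2 ≤ n)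
    (φ : Fin (n+1) × Fin (n+1) → ℂ)
    (hφ : φ = fun p => if p.1 = 0 ∧ p.2 = 0 then ((Real.sqrt 2 : ℂ))⁻¹
      else if p.1 = Fin.last n ∧ p.2 = Fin.last n then ((Real.sqrt 2 : ℂ))⁻¹ else 0)
    (ρout : Matrix (Fin (n+1) × Fin (n+1)) (Fin (n+1) × Fin (n+1)) ℂ)
    (hρ : ρout = ((((n : ℂ)/2) * ((n : ℂ)/2 + 1))^2)⁻¹ •
      ∑ α : Fin 3, ∑ β : Fin 3,
        (Jvec n α ⊗ₖ Jvec n β) * Matrix.vecMulVec φ (star φ) * (Jvec n α ⊗ₖ Jvec n β)ᴴ)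
    (ρΓ : Matrix (Fin (n+1) × Fin (n+1)) (Fin (n+1) × Fin (n+1)) ℂ)
    (hΓ : ρΓ = Matrix.of fun p q => ρout (p.1, q.2) (q.1, p.2)) :
    ¬ ρΓ.PosSemidef ∧
      ¬ ∃ (N : ℕ) (A B : Fin N → Matrix (Fin (n+1)) (Fin (n+1)) ℂ),
          (∀ i, (A i).PosSemidef ∧ (B i).PosSemidef) ∧
          ρout = ∑ i, (A i) ⊗ₖ (B i) := by
  have hΓ' : ρΓ = ρout.partialTranspose := hΓ
  have hρ' :
      ρout = LSTensorSq n (vecMulVec (extremalBellState n) (star (extremalBellState n))) := by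
    rw [hρ, hφ, ← extremalBellState_eq_ite (by omega)]
    rfl
  have not_ppt : ¬ ρΓ.PosSemidef := by
    rw [hΓ', hρ']
    exact not_posSemidef_partialTranspose_LSTensorSq_extremalBellState hn
  refine ⟨not_ppt, ?_⟩
  rintro ⟨N, A, B, hAB, hsep⟩
  exact not_ppt (hΓ' ▸ hsep ▸ posSemidef_partialTranspose_sum_kronecker hAB)
end
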